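/- The base change of a QUED-submersion is a QUED-submersion: if p : X → Z is a local subduction that is cartesian in the category of quasi-étale diffeological spaces, and f : Y → Z is any morphism in this category, then pr₂ : X ×_Z Y → Y is also a local subduction and cartesian. -/

import Mathlib

open Set Function
open scoped Manifold

/-! ## Diffeological spaces -/

/-- A diffeology on a type `X`.  A plot is a map `(Fin n → ℝ) → X` together with an open
domain `U ⊆ ℝⁿ`; only the values on `U` matter. -/
structure DiffeologyStr (X : Type*) where
  IsPlot : {n : ℕ} → Set (Fin n → ℝ) → ((Fin n → ℝ) → X) → Prop
  isOpen_of_isPlot : ∀ {n : ℕ} {U : Set (Fin n → ℝ)} {φ : (Fin n → ℝ) → X},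
      IsPlot U φ → IsOpen U
  isPlot_const : ∀ {n : ℕ} {U : Set (Fin n → ℝ)}, IsOpen U → ∀ x : X,
      IsPlot U fun _ => x
  isPlot_congr : ∀ {n : ℕ} {U : Set (Fin n → ℝ)} {φ ψ : (Fin n → ℝ) → X},
      Set.EqOn φ ψ U → IsPlot U φ → IsPlot U ψ
  isPlot_comp : ∀ {n m : ℕ} {U : Set (Fin n → ℝ)} {φ : (Fin n → ℝ) → X}
      {V : Set (Fin m → ℝ)} {g : (Fin m → ℝ) → (Fin n → ℝ)},
      IsPlot U φ → IsOpen V → ContDiffOn ℝ (⊤ : ℕ∞) g V → Set.MapsTo g V U →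
      IsPlot V (φ ∘ g)
  isPlot_locality : ∀ {n : ℕ} {U : Set (Fin n → ℝ)} {φ : (Fin n → ℝ) → X}, IsOpen U →
      (∀ u ∈ U, ∃ V, V ⊆ U ∧ IsOpen V ∧ u ∈ V ∧ IsPlot V φ) → IsPlot U φ

namespace DiffeologyStr

variable {X Y : Type*}

/-- A subset is D-open if its preimage under every plot is open. -/
def dOpen (DX : DiffeologyStr X) (S : Set X) : Prop :=
  ∀ {n : ℕ} {U : Set (Fin n → ℝ)} {φ : (Fin n → ℝ) → X},
    DX.IsPlot U φ → IsOpen (U ∩ φ ⁻¹' S)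

/-- The product diffeology. -/
def prod (DX : DiffeologyStr X) (DY : DiffeologyStr Y) : DiffeologyStr (X × Y) where
  IsPlot U φ := DX.IsPlot U (fun u => (φ u).1) ∧ DY.IsPlot U (fun u => (φ u).2)
  isOpen_of_isPlot h := DX.isOpen_of_isPlot h.1
  isPlot_const hU x := ⟨DX.isPlot_const hU x.1, DY.isPlot_const hU x.2⟩
  isPlot_congr h hp :=
    ⟨DX.isPlot_congr (fun u hu => by rw [h hu]) hp.1,
     DY.isPlot_congr (fun u hu => by rw [h hu]) hp.2⟩
  isPlot_comp h hV hg hmap :=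
    ⟨DX.isPlot_comp h.1 hV hg hmap, DY.isPlot_comp h.2 hV hg hmap⟩
  isPlot_locality hU h :=
    ⟨DX.isPlot_locality hU fun u hu => by
        obtain ⟨V, h1, h2, h3, h4⟩ := h u hu; exact ⟨V, h1, h2, h3, h4.1⟩,
     DY.isPlot_locality hU fun u hu => by
        obtain ⟨V, h1, h2, h3, h4⟩ := h u hu; exact ⟨V, h1, h2, h3, h4.2⟩⟩

/-- The subset diffeology. -/
def subset (DX : DiffeologyStr X) (S : Set X) : DiffeologyStr S where
  IsPlot U φ := DX.IsPlot U fun u => (φ u : X)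
  isOpen_of_isPlot h := DX.isOpen_of_isPlot h
  isPlot_const hU x := DX.isPlot_const hU (x : X)
  isPlot_congr h hp := DX.isPlot_congr (fun u hu => congrArg Subtype.val (h hu)) hp
  isPlot_comp h hV hg hmap := DX.isPlot_comp h hV hg hmap
  isPlot_locality hU h := DX.isPlot_locality hU fun u hu => h u hu

end DiffeologyStr

variable {X Y Z : Type*}

/-- Smooth maps of diffeological spaces. -/
def DSmooth (DX : DiffeologyStr X) (DY : DiffeologyStr Y) (f : X → Y) : Prop :=
  ∀ {n : ℕ} {U : Set (Fin n → ℝ)} {φ : (Fin n → ℝ) → X},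
    DX.IsPlot U φ → DY.IsPlot U (f ∘ φ)

/-- Smoothness of a map on a subset (w.r.t. the subset diffeology). -/
def DSmoothOn (DX : DiffeologyStr X) (DY : DiffeologyStr Y) (f : X → Y) (O : Set X) : Prop :=
  ∀ {n : ℕ} {U : Set (Fin n → ℝ)} {φ : (Fin n → ℝ) → X},
    DX.IsPlot U φ → Set.MapsTo φ U O → DY.IsPlot U (f ∘ φ)

/-- Subductions: plots downstairs lift locally. -/
def IsSubduction (DX : DiffeologyStr X) (DY : DiffeologyStr Y) (f : X → Y) : Prop :=
  DSmooth DX DY f ∧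
    ∀ {n : ℕ} {U : Set (Fin n → ℝ)} {φ : (Fin n → ℝ) → Y}, DY.IsPlot U φ → ∀ u ∈ U,
      ∃ V, V ⊆ U ∧ IsOpen V ∧ u ∈ V ∧ ∃ ψ, DX.IsPlot V ψ ∧ Set.EqOn (f ∘ ψ) φ V

/-- Local subductions: plots lift locally through any prescribed point of the fiber. -/
def IsLocalSubduction (DX : DiffeologyStr X) (DY : DiffeologyStr Y) (f : X → Y) : Prop :=
  DSmooth DX DY f ∧
    ∀ {n : ℕ} {U : Set (Fin n → ℝ)} {φ : (Fin n → ℝ) → Y}, DY.IsPlot U φ →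
      ∀ u ∈ U, ∀ x : X, f x = φ u →
      ∃ V, V ⊆ U ∧ IsOpen V ∧ u ∈ V ∧
        ∃ ψ, DX.IsPlot V ψ ∧ ψ u = x ∧ Set.EqOn (f ∘ ψ) φ V

/-- `DY` is the quotient diffeology of `DX` along `π`: plots are exactly the maps that
locally lift to plots of `X`. -/
def IsQuotientDiffeology (DX : DiffeologyStr X) (π : X → Y) (DY : DiffeologyStr Y) : Prop :=
  ∀ {n : ℕ} (U : Set (Fin n → ℝ)) (φ : (Fin n → ℝ) → Y),
    DY.IsPlot U φ ↔ (IsOpen U ∧ ∀ u ∈ U, ∃ V, V ⊆ U ∧ IsOpen V ∧ u ∈ V ∧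
      ∃ ψ, DX.IsPlot V ψ ∧ Set.EqOn (π ∘ ψ) φ V)

/-- A subset is totally disconnected if every plot taking values in it is locally constant. -/
def TotallyDisconnectedIn (DX : DiffeologyStr X) (S : Set X) : Prop :=
  ∀ {n : ℕ} {U : Set (Fin n → ℝ)} {φ : (Fin n → ℝ) → X},
    DX.IsPlot U φ → Set.MapsTo φ U S → ∀ u ∈ U,
      ∃ V, V ⊆ U ∧ IsOpen V ∧ u ∈ V ∧ ∀ v ∈ V, φ v = φ u

/-- `f` is a local diffeomorphism on the D-open set `O`. -/
def IsLocalDiffeoOn (DX : DiffeologyStr X) (f : X → X) (O : Set X) : Prop :=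
  ∀ x ∈ O, ∃ V, V ⊆ O ∧ DX.dOpen V ∧ x ∈ V ∧ DX.dOpen (f '' V) ∧ Set.InjOn f V ∧
    ∃ g : X → X, DSmoothOn DX DX g (f '' V) ∧ ∀ v ∈ V, g (f v) = v

/-- Quasi-étale maps of diffeological spaces: (QE1) a local subduction, (QE2) with totally
disconnected fibers, such that (QE3) every smooth map over the base defined on a D-open set
is a local diffeomorphism. -/
def IsQuasiEtale (DX : DiffeologyStr X) (DY : DiffeologyStr Y) (π : X → Y) : Prop :=
  IsLocalSubduction DX DY π ∧
  (∀ y : Y, TotallyDisconnectedIn DX (π ⁻¹' {y})) ∧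
  ∀ (O : Set X) (f : X → X), DX.dOpen O → DSmoothOn DX DX f O →
    (∀ x ∈ O, π (f x) = π x) → IsLocalDiffeoOn DX f O

/-! ## Manifolds as diffeological spaces -/

/-- `DM` is the manifold diffeology of the manifold `M`: plots are the smooth maps from
open subsets of Euclidean spaces. -/
def IsManifoldDiffeology {E H : Type*} [NormedAddCommGroup E] [NormedSpace ℝ E]
    [TopologicalSpace H] (I : ModelWithCorners ℝ E H) {M : Type*} [TopologicalSpace M]
    [ChartedSpace H M] (DM : DiffeologyStr M) : Prop :=
  ∀ {n : ℕ} (U : Set (Fin n → ℝ)) (φ : (Fin n → ℝ) → M),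
    DM.IsPlot U φ ↔ (IsOpen U ∧ ContMDiffOn 𝓘(ℝ, Fin n → ℝ) I (⊤ : ℕ∞) φ U)

/-- A witness that the diffeological space `(M, DM)` is a smooth (finite-dimensional,
Hausdorff, second countable) manifold with its manifold diffeology. -/
structure ManifoldDiffeologyWitness (M : Type*) (DM : DiffeologyStr M) where
  d : ℕ
  [tM : TopologicalSpace M]
  [cM : ChartedSpace (EuclideanSpace ℝ (Fin d)) M]
  smooth : IsManifold (𝓡 d) ((⊤ : ℕ∞) : WithTop ℕ∞) M
  t2 : T2Space M
  sc : SecondCountableTopology M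
  isDiffeology : IsManifoldDiffeology (𝓡 d) DM

/-- The diffeological space `(M, DM)` is a smooth manifold. -/
def IsSmoothManifoldDiffeology {M : Type*} (DM : DiffeologyStr M) : Prop :=
  Nonempty (ManifoldDiffeologyWitness M DM)

/-- A quasi-étale diffeological space: every point lies in the image of a quasi-étale
chart, i.e. a quasi-étale map from a smooth manifold. -/
def IsQuasiEtaleSpace {X : Type*} (DX : DiffeologyStr X) : Prop :=
  ∀ x : X, ∃ (M : Type) (DM : DiffeologyStr M) (π : M → X),
    IsSmoothManifoldDiffeology DM ∧ IsQuasiEtale DM DX π ∧ x ∈ Set.range π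

/-! ## Fiber products and cartesian morphisms in QUED -/

/-- The diffeological fiber product `X ×_Z Y` of `p : X → Z` and `f : Y → Z`. -/
def fiberProductDiffeology (DX : DiffeologyStr X) (DY : DiffeologyStr Y) (p : X → Z)
    (f : Y → Z) : DiffeologyStr {w : X × Y // p w.1 = f w.2} :=
  (DX.prod DY).subset {w | p w.1 = f w.2}

/-- `p : X → Z` is cartesian in the category QUED of quasi-étale diffeological spaces:
for every QUED morphism `f : Y → Z` the diffeological fiber product is again a
quasi-étale diffeological space (so it provides the fiber product in QUED; when it is
empty there is no commutative square over `p` and `f` in QUED). -/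
def IsCartesianQUED (DX : DiffeologyStr X) {Z : Type*} (DZ : DiffeologyStr Z) (p : X → Z) : Prop :=
  ∀ (Y : Type) (DY : DiffeologyStr Y), IsQuasiEtaleSpace DY → ∀ f : Y → Z, DSmooth DY DZ f →
    IsQuasiEtaleSpace (fiberProductDiffeology DX DY p f)

/-- Transport of being a quasi-étale space along a diffeological isomorphism. -/
lemma isQuasiEtaleSpace_transport {A B : Type} (DA : DiffeologyStr A) (DB : DiffeologyStr B)
    (e : A → B) (i : B → A) (hei : ∀ a, i (e a) = a) (hie : ∀ b, e (i b) = b)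
    (he : DSmooth DA DB e) (hi : DSmooth DB DA i) (h : IsQuasiEtaleSpace DA) :
    IsQuasiEtaleSpace DB := by
  intro b
  obtain ⟨M, DM, π, hM, ⟨⟨hsm, hlift⟩, hfib, hQ3⟩, hmem⟩ := h (i b)
  refine ⟨M, DM, e ∘ π, hM, ⟨⟨fun hφ => he (hsm hφ), ?_⟩, ?_, ?_⟩, ?_⟩
  · intro n U φ hφ u hu m hm
    have hπm : π m = i (φ u) := by
      rw [← hei (π m)]; exact congrArg i hm
    obtain ⟨V, hVU, hVo, huV, ψ, hψ, hψu, heq⟩ := hlift (hi hφ) u hu m hπm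
    refine ⟨V, hVU, hVo, huV, ψ, hψ, hψu, fun v hv => ?_⟩
    show e (π (ψ v)) = φ v
    have h1 : π (ψ v) = i (φ v) := heq hv
    rw [h1, hie]
  · intro y n U φ hφ hmaps u hu
    refine hfib (i y) hφ (fun v hv => ?_) u hu
    show π (φ v) = i y
    rw [← hei (π (φ v))]
    exact congrArg i (hmaps hv)
  · intro O gg hO hsmO hover
    refine hQ3 O gg hO hsmO fun x hx => ?_
    rw [← hei (π (gg x)), ← hei (π x)]
    exact congrArg i (hover x hx)
  · obtain ⟨m, hm⟩ := hmem
    exact ⟨m, by show e (π m) = b; rw [hm, hie]⟩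

/-- The base change of a QUED-submersion is a QUED-submersion: if
`p : X → Z` is a local subduction which is cartesian in QUED and `f : Y → Z` is any
morphism in QUED, then `pr₂ : X ×_Z Y → Y` is again a local subduction and cartesian. -/
theorem statement11 {X Z Y : Type}
    (DX : DiffeologyStr X) (DZ : DiffeologyStr Z) (DY : DiffeologyStr Y)
    (hX : IsQuasiEtaleSpace DX) (hZ : IsQuasiEtaleSpace DZ) (hY : IsQuasiEtaleSpace DY)
    (p : X → Z) (hpsm : DSmooth DX DZ p)
    (hpl : IsLocalSubduction DX DZ p) (hpc : IsCartesianQUED DX DZ p)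
    (f : Y → Z) (hf : DSmooth DY DZ f) :
    IsLocalSubduction (fiberProductDiffeology DX DY p f) DY
        (fun w => (w : X × Y).2) ∧
    IsCartesianQUED (fiberProductDiffeology DX DY p f) DY
        (fun w => (w : X × Y).2) := by
  constructor
  · -- pr₂ is a local subduction
    constructor
    · intro n U φ hφ
      exact hφ.2
    · intro n U φ hφ u hu w hw
      have hw' : (w.val).2 = φ u := hw
      have hpx : p (w.val.1) = (f ∘ φ) u := by
        show p (w.val.1) = f (φ u)
        rw [w.property, hw']
      obtain ⟨V, hVU, hVo, huV, ψ, hψ, hψu, heq⟩ := hpl.2 (hf hφ) u hu w.val.1 hpx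
      classical
      refine ⟨V, hVU, hVo, huV,
        fun v => if h : p (ψ v) = f (φ v) then ⟨(ψ v, φ v), h⟩ else w, ?_, ?_, ?_⟩
      · -- it is a plot of the fiber product
        refine ⟨DX.isPlot_congr (φ := ψ) (fun v hv => ?_) hψ,
          DY.isPlot_congr (φ := φ)
            (fun v hv => ?_) (DY.isPlot_comp hφ hVo contDiffOn_id fun v hv => hVU hv)⟩
        · have h : p (ψ v) = f (φ v) := heq hv
          simp [h]
        · have h : p (ψ v) = f (φ v) := heq hv
          simp [h]
      · have h : p (ψ u) = f (φ u) := heq huV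
        have h1 : ψ u = w.val.1 := hψu
        have h2 : φ u = w.val.2 := hw'.symm
        simp only [h, dif_pos]
        exact Subtype.ext (Prod.ext h1 h2)
      · intro v hv
        have h : p (ψ v) = f (φ v) := heq hv
        simp [h]
  · -- pr₂ is cartesian in QUED
    intro W DW hW g hg
    have hS : IsQuasiEtaleSpace (fiberProductDiffeology DX DW p (f ∘ g)) :=
      hpc W DW hW (f ∘ g) (fun hφ => hf (hg hφ))
    refine isQuasiEtaleSpace_transport _ _
      (fun s => ⟨(⟨(s.val.1, g s.val.2), s.property⟩, s.val.2), rfl⟩)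
      (fun t => ⟨(t.val.1.val.1, t.val.2),
        t.val.1.property.trans (congrArg f t.property)⟩)
      ?_ ?_ ?_ ?_ hS
    · rintro ⟨⟨x, w⟩, h⟩
      rfl
    · rintro ⟨⟨⟨⟨x, y⟩, h⟩, w⟩, k⟩
      have k' : y = g w := k
      subst k'
      rfl
    · intro n U φ hφ
      exact ⟨⟨hφ.1, hg hφ.2⟩, hφ.2⟩
    · intro n U φ hφ
      exact ⟨hφ.1.1, hφ.2⟩
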